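/- If x ∈ Γ_k^n and x_1 ≥ x_2 ≥ ... ≥ x_n, then s_{k-1}(x) ≥ x_1·x_2·...·x_{k-1}. -/

import Mathlib

/-!
Let `a` be the largest entry of `x ∈ Γₖ` and `x'` the others. Then `a > 0` (as `s₁(x) > 0`) and
`s_{k-1}(x) = s_{k-1}(x') + a s_{k-2}(x')`, so everything follows by induction on `k` once we know
that `x' ∈ Γ_{k-1}`; this holds for any positive entry `a`. If all of `x'` is positive it is clear.
Otherwise remove a nonpositive entry `c` of `x'`: dropping a nonpositive entry keeps a vector in
`Γₖ`, so by induction `x'` without `c` lies in `Γ_{k-1}`, and `c` can be put back because of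
Newton's inequality `s_l s_{l+2} ≤ s_{l+1}²`. Newton's inequality in turn comes from Rolle's
theorem: differentiating `∏ (t + xᵢ)` keeps all roots real and reduces it to the lowest three
coefficients of a real-rooted polynomial, i.e. the top three elementary symmetric functions of
its roots, where it is Cauchy–Schwarz.
-/

open Finset

/-- The `k`-th elementary symmetric polynomial of `x ∈ ℝⁿ`. -/
noncomputable def esymm (n k : ℕ) (x : Fin n → ℝ) : ℝ :=
  ∑ A ∈ Finset.powersetCard k (Finset.univ : Finset (Fin n)), ∏ i ∈ A, x i

/-- The Gårding cone `Γₖⁿ = {x : sₗ(x) > 0, l = 1,…,k}`. -/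
def GammaK (n k : ℕ) (x : Fin n → ℝ) : Prop :=
  ∀ l, 1 ≤ l → l ≤ k → 0 < esymm n l x

open Polynomial

namespace Multiset

section CommSemiring

variable {R : Type*} [CommSemiring R]

@[simp]
theorem esymm_zero_right (s : Multiset R) : s.esymm 0 = 1 := by
  simp [esymm]

theorem esymm_eq_zero_of_card_lt {s : Multiset R} {l : ℕ} (h : card s < l) : s.esymm l = 0 := by
  simp [esymm, powersetCard_eq_empty _ h]

theorem esymm_card (s : Multiset R) : s.esymm (card s) = s.prod := by
  simp [esymm, powersetCard_self]

theorem esymm_one (s : Multiset R) : s.esymm 1 = s.sum := by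
  simp [esymm, powersetCard_one]

theorem esymm_cons_succ (a : R) (s : Multiset R) (l : ℕ) :
    (a ::ₘ s).esymm (l + 1) = s.esymm (l + 1) + a * s.esymm l := by
  simp [esymm, powersetCard_cons, sum_map_mul_left]

theorem esymm_card_map_pow (s : Multiset R) (m : ℕ) :
    (s.map (· ^ m)).esymm (card s) = s.esymm (card s) ^ m := by
  simpa [esymm_card, prod_map_pow] using esymm_card (s.map (· ^ m))

theorem esymm_pos [PartialOrder R] [IsStrictOrderedRing R] {s : Multiset R}
    (h : ∀ a ∈ s, 0 < a) {l : ℕ} (hl : l ≤ card s) : 0 < s.esymm l := by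
  have hne : s.powersetCard l ≠ 0 := by
    simpa [← card_pos] using Nat.choose_pos hl
  simpa [esymm] using sum_lt_sum_of_nonempty (f := fun _ => (0 : R)) (g := prod) hne fun t ht =>
    prod_pos fun a ha => h a (mem_of_le (mem_powersetCard.1 ht).1 ha)

end CommSemiring

/- With `Qᵢ = ∏_{j ≠ i} zⱼ` we have `z.esymm (d + 1) = ∑ Qᵢ`, `z.esymm (d + 2) * z.esymm d =
∑_{i < j} Qᵢ Qⱼ` and `(z.map (· ^ 2)).esymm (d + 1) = ∑ Qᵢ²`: the next two lemmas are the
expansion of a square and Cauchy–Schwarz. -/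

theorem sq_esymm_eq_of_card_eq {R : Type*} [CommRing R] {z : Multiset R} {d : ℕ}
    (hz : card z = d + 2) :
    z.esymm (d + 1) ^ 2 = 2 * z.esymm (d + 2) * z.esymm d + (z.map (· ^ 2)).esymm (d + 1) := by
  induction z using Multiset.induction_on generalizing d with
  | empty => simp at hz
  | cons a w ih =>
    rw [Multiset.card_cons, Nat.add_right_cancel_iff] at hz
    cases d with
    | zero =>
      obtain ⟨b, rfl⟩ := card_eq_one.1 hz
      simp
      ring
    | succ d =>
      have hw := esymm_card_map_pow w 2
      rw [hz] at hw
      simp only [map_cons, esymm_cons_succ, hw,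
        esymm_eq_zero_of_card_lt (by omega : card w < d + 3)]
      linear_combination a ^ 2 * ih hz

theorem sq_esymm_le_of_card_eq {z : Multiset ℝ} {d : ℕ} (hz : card z = d + 1) :
    z.esymm d ^ 2 ≤ (d + 1) * (z.map (· ^ 2)).esymm d := by
  induction z using Multiset.induction_on generalizing d with
  | empty => simp at hz
  | cons a w ih =>
    rw [Multiset.card_cons, Nat.add_right_cancel_iff] at hz
    cases d with
    | zero => simp
    | succ d =>
      have hw := esymm_card_map_pow w 2
      rw [hz] at hw
      simp only [map_cons, esymm_cons_succ, hw]
      push_cast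
      nlinarith [sq_nonneg ((d + 1) * w.esymm (d + 1) - a * w.esymm d),
        mul_le_mul_of_nonneg_left (ih hz) (sq_nonneg a)]

theorem esymm_mul_esymm_le_of_card_eq {z : Multiset ℝ} {d : ℕ} (hz : card z = d + 2) :
    2 * (d + 2) * (z.esymm (d + 2) * z.esymm d) ≤ (d + 1) * z.esymm (d + 1) ^ 2 := by
  have h := sq_esymm_le_of_card_eq (d := d + 1) hz
  push_cast at h
  nlinarith [sq_esymm_eq_of_card_eq hz]

end Multiset

namespace Polynomial

theorem Splits.derivative_of_real {p : ℝ[X]} (hp : p.Splits) : (derivative p).Splits := by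
  rw [splits_iff_card_roots] at hp ⊢
  have := card_roots_le_derivative p
  have := card_roots' (derivative p)
  rw [natDegree_derivative] at *
  omega

theorem Splits.iterate_derivative_of_real {p : ℝ[X]} (hp : p.Splits) (i : ℕ) :
    (derivative^[i] p).Splits := by
  induction i with
  | zero => exact hp
  | succ i ih => simpa only [Function.iterate_succ_apply'] using ih.derivative_of_real

theorem natDegree_iterate_derivative_eq {R : Type*} [Semiring R] [IsAddTorsionFree R]
    (p : R[X]) (i : ℕ) : (derivative^[i] p).natDegree = p.natDegree - i := by
  induction i with
  | zero => rfl
  | succ i ih => rw [Function.iterate_succ_apply', natDegree_derivative, ih, Nat.sub_sub]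

theorem coeff_zero_mul_coeff_two_le {g : ℝ[X]} (hg : g.Splits) {d : ℕ}
    (hdeg : g.natDegree = d + 2) :
    2 * (d + 2) * (g.coeff 0 * g.coeff 2) ≤ (d + 1) * g.coeff 1 ^ 2 := by
  have hroots := splits_iff_card_roots.1 hg
  have hvieta (i : ℕ) (hi : i ≤ 2) := coeff_eq_esymm_roots_of_card hroots (k := i) (by omega)
  rw [hvieta 0 (by norm_num), hvieta 1 (by norm_num), hvieta 2 (by norm_num), hdeg,
    show d + 2 - 0 = d + 2 by omega, show d + 2 - 1 = d + 1 by omega, show d + 2 - 2 = d by omega]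
  have h := mul_le_mul_of_nonneg_left (Multiset.esymm_mul_esymm_le_of_card_eq (hroots.trans hdeg))
    (sq_nonneg g.leadingCoeff)
  rcases neg_one_pow_eq_or ℝ d with hs | hs <;>
    simp only [pow_succ, hs] <;> linear_combination h

theorem coeff_mul_coeff_add_two_le {p : ℝ[X]} (hp : p.Splits) {i d : ℕ}
    (hdeg : p.natDegree = i + d + 2) :
    (i + 2) * (d + 2) * (p.coeff i * p.coeff (i + 2)) ≤
      (i + 1) * (d + 1) * p.coeff (i + 1) ^ 2 := by
  have h := coeff_zero_mul_coeff_two_le (hp.iterate_derivative_of_real i) (d := d)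
    (by rw [natDegree_iterate_derivative_eq, hdeg]; omega)
  simp only [coeff_iterate_derivative, nsmul_eq_mul, zero_add, Nat.descFactorial_self] at h
  rw [add_comm 1 i, add_comm 2 i] at h
  have h1 : (i + 1).descFactorial i = (i + 1) * i.factorial := by
    simpa [Nat.descFactorial_self] using Nat.succ_descFactorial i i
  have h2 : 2 * (i + 2).descFactorial i = (i + 2) * (i + 1).descFactorial i := by
    have := Nat.succ_descFactorial (i + 1) i
    rwa [show i + 1 + 1 - i = 2 by omega] at this
  rw [h1] at h h2
  have h2' : 2 * ((i + 2).descFactorial i : ℝ) = (i + 2) * ((i + 1) * i.factorial) := by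
    exact_mod_cast h2
  push_cast at h
  have hpos : (0 : ℝ) < (i + 1) * i.factorial ^ 2 := by positivity
  refine le_of_mul_le_mul_left ?_ hpos
  linear_combination h - (d + 2) * p.coeff i * p.coeff (i + 2) * i.factorial * h2'

end Polynomial

namespace Multiset

theorem esymm_mul_esymm_le_sq (s : Multiset ℝ) (j : ℕ) :
    s.esymm j * s.esymm (j + 2) ≤ s.esymm (j + 1) ^ 2 := by
  rcases lt_or_ge (card s) (j + 2) with hs | hs
  · rw [esymm_eq_zero_of_card_lt hs, mul_zero]
    positivity
  obtain ⟨i, hi⟩ : ∃ i, card s = i + j + 2 := ⟨card s - j - 2, by omega⟩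
  set P := (s.map fun a => X + C a).prod
  have hP : P.Splits := Splits.multisetProd (by simp [Splits.X_add_C])
  have hdeg : P.natDegree = card s := by
    rw [natDegree_multiset_prod_of_monic _ (by simp [monic_X_add_C])]
    simp
  have hcoeff (l : ℕ) (hl : l ≤ 2) : P.coeff (i + l) = s.esymm (j + 2 - l) := by
    rw [prod_X_add_C_coeff s (by omega)]
    congr 1
    omega
  have h := coeff_mul_coeff_add_two_le hP (hdeg.trans hi)
  rw [show P.coeff i = s.esymm (j + 2) from hcoeff 0 (by norm_num),
    show P.coeff (i + 1) = s.esymm (j + 1) from hcoeff 1 (by norm_num),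
    show P.coeff (i + 2) = s.esymm j from hcoeff 2 (by norm_num)] at h
  have hweights : ((i : ℝ) + 1) * (j + 1) ≤ (i + 2) * (j + 2) := by gcongr <;> norm_num
  refine le_of_mul_le_mul_left ?_ (by positivity : (0 : ℝ) < (i + 2) * (j + 2))
  rw [mul_comm (s.esymm j)]
  exact h.trans (mul_le_mul_of_nonneg_right hweights (sq_nonneg _))

end Multiset

open Multiset

/-- The multiset form of `GammaK`; the condition at `l = 0` is automatic, as `s.esymm 0 = 1`. -/
def gardingCone (k : ℕ) : Set (Multiset ℝ) := {s | ∀ l ≤ k, 0 < s.esymm l}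

theorem card_le_of_mem_gardingCone {s : Multiset ℝ} {k : ℕ} (hs : s ∈ gardingCone k) :
    k ≤ card s := by
  by_contra h
  simpa [esymm_eq_zero_of_card_lt (not_le.1 h)] using hs k le_rfl

theorem mem_gardingCone_of_cons_mem_of_nonpos {c : ℝ} {s : Multiset ℝ} {k : ℕ} (hc : c ≤ 0)
    (h : c ::ₘ s ∈ gardingCone k) : s ∈ gardingCone k := by
  intro l hl
  induction l with
  | zero => simp
  | succ l ih =>
    have := h (l + 1) hl
    rw [esymm_cons_succ] at this
    nlinarith [ih (by omega)]

/- If `s_{l+1}(c :: s) ≤ 0`, positivity of `s_{l+2}(a :: c :: s)` forces `s_{l+2}(c :: s) > 0`,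
and the two together contradict Newton's inequality for `s`. -/
theorem cons_mem_gardingCone_of_cons_cons_mem {a c : ℝ} {s : Multiset ℝ} {k : ℕ}
    (hs : s ∈ gardingCone k) (ha : 0 < a) (h : a ::ₘ c ::ₘ s ∈ gardingCone (k + 1)) :
    c ::ₘ s ∈ gardingCone k := by
  rintro (_ | l) hl
  · simp
  by_contra! hB
  have h2 := h (l + 2) (by omega)
  rw [esymm_cons_succ] at hB
  rw [esymm_cons_succ, esymm_cons_succ, esymm_cons_succ] at h2
  have p0 := hs l (by omega)
  have p1 := hs (l + 1) hl
  have hA : 0 < s.esymm (l + 2) + c * s.esymm (l + 1) := by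
    nlinarith [mul_nonpos_of_nonneg_of_nonpos ha.le hB]
  have hc : c * s.esymm l * s.esymm (l + 1) ≤ -s.esymm (l + 1) ^ 2 := by
    nlinarith [mul_le_mul_of_nonneg_right (by linarith : c * s.esymm l ≤ -s.esymm (l + 1)) p1.le]
  nlinarith [esymm_mul_esymm_le_sq s l, mul_pos p0 hA]

theorem mem_gardingCone_of_cons_mem {a : ℝ} {s : Multiset ℝ} {k : ℕ} (ha : 0 < a)
    (h : a ::ₘ s ∈ gardingCone (k + 1)) : s ∈ gardingCone k := by
  induction s using Multiset.strongInductionOn with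
  | ih s ih =>
    by_cases hpos : ∀ b ∈ s, 0 < b
    · have := card_le_of_mem_gardingCone h
      rw [Multiset.card_cons] at this
      exact fun l hl => esymm_pos hpos (by omega)
    push Not at hpos
    obtain ⟨c, hc, hc0⟩ := hpos
    obtain ⟨t, rfl⟩ := exists_cons_of_mem hc
    have ht : a ::ₘ t ∈ gardingCone (k + 1) :=
      mem_gardingCone_of_cons_mem_of_nonpos hc0 (by rwa [Multiset.cons_swap])
    exact cons_mem_gardingCone_of_cons_cons_mem (ih t (lt_cons_self t c) ht) ha h

theorem List.prod_take_le_esymm {L : List ℝ} (hL : L.Pairwise (· ≥ ·)) {m : ℕ}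
    (hΓ : (L : Multiset ℝ) ∈ gardingCone (m + 1)) :
    (L.take m).prod ≤ (L : Multiset ℝ).esymm m := by
  induction L generalizing m with
  | nil => simpa using card_le_of_mem_gardingCone hΓ
  | cons a L ih =>
    rw [List.pairwise_cons] at hL
    rw [← cons_coe] at hΓ ⊢
    cases m with
    | zero => simp
    | succ m =>
      have ha : 0 < a := by
        by_contra! ha
        have hsum := hΓ 1 (by omega)
        rw [esymm_one, Multiset.sum_cons, sum_coe] at hsum
        have := List.sum_le_card_nsmul L a hL.1
        nlinarith [nsmul_eq_mul L.length a, L.length.cast_nonneg (α := ℝ)]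
      have hL' := mem_gardingCone_of_cons_mem ha hΓ
      rw [List.take_succ_cons, List.prod_cons, esymm_cons_succ]
      nlinarith [ih hL.2 hL', hL' (m + 1) le_rfl]

theorem esymm_eq_esymm_ofFn (n l : ℕ) (x : Fin n → ℝ) :
    esymm n l x = (List.ofFn x : Multiset ℝ).esymm l := by
  rw [← Fin.univ_val_map, Finset.esymm_map_val]
  rfl

theorem mem_gardingCone_of_gammaK {n k : ℕ} {x : Fin n → ℝ} (hx : GammaK n k x) :
    (List.ofFn x : Multiset ℝ) ∈ gardingCone k := by
  rintro (_ | l) hl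
  · simp
  · rw [← esymm_eq_esymm_ofFn]
    exact hx (l + 1) (by omega) hl

theorem esymm_ge_prod_first_general (n k : ℕ)
    (x : Fin n → ℝ) (hx : GammaK n k x) (hmono : Antitone x) :
    esymm n (k - 1) x ≥ ∏ i ∈ Finset.univ.filter (fun i : Fin n => (i : ℕ) < k - 1), x i := by
  rw [esymm_eq_esymm_ofFn, ← List.prod_take_ofFn]
  rcases k with _ | m
  · simp
  · exact List.prod_take_le_esymm (List.sortedGE_ofFn_iff.2 hmono).pairwise
      (mem_gardingCone_of_gammaK hx)

/-- If x ∈ Γₖⁿ is decreasing, then s_{k-1}(x) ≥ x₁·x₂⋯x_{k-1}. -/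
theorem esymm_ge_prod_first (n k : ℕ) (hk : 1 ≤ k) (hkn : k ≤ n)
    (x : Fin n → ℝ) (hx : GammaK n k x) (hmono : Antitone x) :
    esymm n (k - 1) x ≥ ∏ i ∈ Finset.univ.filter (fun i : Fin n => (i : ℕ) < k - 1), x i :=
  esymm_ge_prod_first_general n k x hx hmono
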